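/- Let ψ : [-1,1] → ℝ be ψ(t) = (1-t²) (the 1D bubble function, normalized to max value 1 at 0 with factor adjustment: take ψ(t) = 1 - t²). Then for every polynomial v of degree at most p on [-1,1]: (i) ∫_{-1}^1 (ψ v)² ≤ ∫_{-1}^1 v², and (ii) there is a constant c(p) > 0 with c(p) ∫_{-1}^1 v² ≤ ∫_{-1}^1 ψ v². -/

import Mathlib

/-!
Part (i) is pointwise: `0 ≤ 1 - t² ≤ 1` on `[-1, 1]`. For part (ii), identify polynomials of degree
`≤ p` with their coefficient vectors in `ℝ^(p+1)`. Both `∫ ψ v²` and `∫ v²` are continuous and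
homogeneous of degree two in the coefficients, and `∫ ψ v² > 0` for `v ≠ 0` because `v` has only
finitely many roots; so their ratio is bounded below on the compact unit sphere, and homogeneity
spreads that bound to all coefficient vectors.
-/

open Polynomial Set Metric

theorem exists_pos_mul_le_of_sq_homogeneous {E : Type*} [NormedAddCommGroup E] [NormedSpace ℝ E]
    [ProperSpace E] {f g : E → ℝ} (hf : Continuous f) (hg : Continuous g)
    (hf_smul : ∀ (r : ℝ) x, f (r • x) = r ^ 2 * f x)
    (hg_smul : ∀ (r : ℝ) x, g (r • x) = r ^ 2 * g x)
    (hf_pos : ∀ x, x ≠ 0 → 0 < f x) :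
    ∃ c, 0 < c ∧ ∀ x, c * g x ≤ f x := by
  obtain ⟨M, hM⟩ : BddAbove ((fun x => g x / f x) '' sphere 0 1) :=
    (isCompact_sphere 0 1).bddAbove_image <| hg.continuousOn.div hf.continuousOn
      fun x hx => (hf_pos x (ne_zero_of_mem_unit_sphere ⟨x, hx⟩)).ne'
  refine ⟨(max M 1)⁻¹, by positivity, fun x => ?_⟩
  rcases eq_or_ne x 0 with rfl | hx
  · have hf0 : f 0 = 0 := by simpa using hf_smul 0 0
    have hg0 : g 0 = 0 := by simpa using hg_smul 0 0
    simp [hf0, hg0]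
  set u := ‖x‖⁻¹ • x
  have hu : u ∈ sphere (0 : E) 1 := by
    simp [u, norm_smul, inv_mul_cancel₀ (norm_ne_zero_iff.mpr hx)]
  have hxu : x = ‖x‖ • u := by simp [u, smul_smul, mul_inv_cancel₀ (norm_ne_zero_iff.mpr hx)]
  have hfu := hf_pos u (ne_zero_of_mem_unit_sphere ⟨u, hu⟩)
  have hgu : g u ≤ max M 1 * f u :=
    (div_le_iff₀ hfu).mp ((hM ⟨u, hu, rfl⟩).trans (le_max_left _ _))
  rw [hxu, hf_smul, hg_smul, inv_mul_le_iff₀ (by positivity)]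
  nlinarith [sq_nonneg ‖x‖]

theorem eval_ofFn {R : Type*} [CommSemiring R] [DecidableEq R] (n : ℕ) (a : Fin n → R) (t : R) :
    (ofFn n a).eval t = ∑ i, a i * t ^ (i : ℕ) := by
  simp [ofFn_eq_sum_monomial, eval_finsetSum]

theorem continuous_eval_ofFn (n : ℕ) :
    Continuous fun x : (Fin n → ℝ) × ℝ => (ofFn n x.1).eval x.2 := by
  simp only [eval_ofFn]
  fun_prop

theorem continuous_integral_mul_eval_ofFn_sq {w : ℝ → ℝ} (hw : Continuous w) (n : ℕ) (a b : ℝ) :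
    Continuous fun x : Fin n → ℝ => ∫ t in a..b, w t * (ofFn n x).eval t ^ 2 :=
  intervalIntegral.continuous_parametric_intervalIntegral_of_continuous'
    ((hw.comp continuous_snd).mul ((continuous_eval_ofFn n).pow 2)) a b

theorem integral_mul_eval_smul_sq (w : ℝ → ℝ) (a b r : ℝ) (v : ℝ[X]) :
    ∫ t in a..b, w t * (r • v).eval t ^ 2 = r ^ 2 * ∫ t in a..b, w t * v.eval t ^ 2 := by
  simp only [eval_smul, smul_eq_mul, mul_pow, mul_left_comm (w _),
    intervalIntegral.integral_const_mul]

theorem integral_mul_eval_sq_pos {w : ℝ → ℝ} {a b : ℝ} (hab : a < b)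
    (hw : ContinuousOn w (Icc a b)) (hw_nonneg : ∀ t ∈ Icc a b, 0 ≤ w t) (hw_pos : ∀ t ∈ Ioo a b, 0 < w t) {v : ℝ[X]} (hv : v ≠ 0) :
    0 < ∫ t in a..b, w t * v.eval t ^ 2 := by
  obtain ⟨t₀, ht₀, hv₀⟩ := ((Ioo_infinite hab).sdiff (finite_setOfPred_isRoot hv)).nonempty
  refine intervalIntegral.integral_pos hab (hw.mul (v.continuous.pow 2).continuousOn)
    (fun t ht => mul_nonneg (hw_nonneg t (Ioc_subset_Icc_self ht)) (sq_nonneg _))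
    ⟨t₀, Ioo_subset_Icc_self ht₀, mul_pos (hw_pos t₀ ht₀) (sq_pos_of_ne_zero hv₀)⟩

theorem integral_sq_one_sub_sq_mul_le {f : ℝ → ℝ} (hf : Continuous f) :
    ∫ t in (-1 : ℝ)..1, ((1 - t ^ 2) * f t) ^ 2 ≤ ∫ t in (-1 : ℝ)..1, f t ^ 2 := by
  refine intervalIntegral.integral_mono_on (by norm_num)
    (((continuous_const.sub (continuous_pow 2)).mul hf).pow 2 |>.intervalIntegrable _ _)
    ((hf.pow 2).intervalIntegrable _ _) fun t ht => ?_
  have : (1 - t ^ 2) ^ 2 ≤ 1 := pow_le_one₀ (by nlinarith [ht.1, ht.2]) (by nlinarith)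
  calc ((1 - t ^ 2) * f t) ^ 2 = (1 - t ^ 2) ^ 2 * f t ^ 2 := by ring
    _ ≤ f t ^ 2 := mul_le_of_le_one_left (sq_nonneg _) this

/-- Bubble-function estimates on the reference interval with `ψ(t) = 1 - t²`:
for polynomials of degree at most `p`,
`∫ (ψ v)² ≤ ∫ v²` and `c(p) ∫ v² ≤ ∫ ψ v²`. -/
theorem stmt_16 (p : ℕ) :
    ∃ c : ℝ, 0 < c ∧ ∀ v : Polynomial ℝ, v.natDegree ≤ p →
      ((∫ t in (-1 : ℝ)..1, ((1 - t ^ 2) * v.eval t) ^ 2)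
          ≤ ∫ t in (-1 : ℝ)..1, (v.eval t) ^ 2) ∧
      (c * ∫ t in (-1 : ℝ)..1, (v.eval t) ^ 2)
          ≤ ∫ t in (-1 : ℝ)..1, (1 - t ^ 2) * (v.eval t) ^ 2 := by
  have hψ : Continuous fun t : ℝ => 1 - t ^ 2 := by fun_prop
  obtain ⟨c, hc, hcomp⟩ := exists_pos_mul_le_of_sq_homogeneous
    (f := fun a => ∫ t in (-1 : ℝ)..1, (1 - t ^ 2) * (ofFn (p + 1) a).eval t ^ 2)
    (g := fun a => ∫ t in (-1 : ℝ)..1, 1 * (ofFn (p + 1) a).eval t ^ 2)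
    (continuous_integral_mul_eval_ofFn_sq hψ _ _ _)
    (continuous_integral_mul_eval_ofFn_sq continuous_const _ _ _)
    (fun r a => by simp only [map_smul, integral_mul_eval_smul_sq])
    (fun r a => by simp only [map_smul, integral_mul_eval_smul_sq])
    (fun a ha => integral_mul_eval_sq_pos (by norm_num) hψ.continuousOn
      (fun t ht => by nlinarith [ht.1, ht.2]) (fun t ht => by nlinarith [ht.1, ht.2])
      ((injective_ofFn _).ne_iff' (ofFn_zero _) |>.mpr ha))
  refine ⟨c, hc, fun v hv => ⟨integral_sq_one_sub_sq_mul_le v.continuous, ?_⟩⟩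
  simpa only [ofFn_comp_toFn_eq_id_of_natDegree_lt (Nat.lt_succ_of_le hv), one_mul]
    using hcomp (toFn (p + 1) v)
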